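/- Let V and P be probability mass functions on a finite set 𝒴 with V absolutely continuous with respect to P, and let Y₁,…,Yₙ be i.i.d. with law P. Then the probability that the empirical distribution (type) of (Y₁,…,Yₙ) equals V (assuming V is an n-type, i.e., n·V(y) ∈ ℕ for all y) is at least (n+1)^{-|𝒴|} · exp(−n·D(V‖P)). -/

import Mathlib

/-
Write `k = n V` and `T_V` for the set of sequences of type `V`. Every sequence in `T_V` has
probability `∏ P(a)^{k a}`, so `Pⁿ(T_V) = |T_V| ∏ P(a)^{k a} = e^{-n D(V‖P)} Vⁿ(T_V)`. By the multinomial theorem the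
`Vⁿ`-probabilities of the at most `(n + 1)^|𝒴|` type classes sum to one, and `T_V` is the most
likely of them: `|T_{k'}| ∏ (k a)^{k' a} ≤ |T_k| ∏ (k a)^{k a}` reduces, factor by factor, to
`m! m^l ≤ l! m^m`. Hence `Vⁿ(T_V) ≥ (n + 1)^{-|𝒴|}`.
-/

open scoped BigOperators

def IsPMF {α : Type*} [Fintype α] (p : α → ℝ) : Prop :=
  (∀ a, 0 ≤ p a) ∧ ∑ a, p a = 1

/-- Real-valued KL divergence `D(V‖P) = Σ_y V(y) ln(V(y)/P(y))`
(with the convention that terms with `V y = 0` vanish). -/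
noncomputable def klReal {α : Type*} [Fintype α] (p q : α → ℝ) : ℝ :=
  ∑ a, if p a = 0 then 0 else p a * Real.log (p a / q a)

/-- Empirical distribution (type) of a sequence `y ∈ 𝒴ⁿ`. -/
noncomputable def empDist {𝒴 : Type*} [Fintype 𝒴] [DecidableEq 𝒴] {n : ℕ}
    (y : Fin n → 𝒴) : 𝒴 → ℝ :=
  fun a => ((Finset.univ.filter fun i => y i = a).card : ℝ) / n

open Finset Nat

theorem Nat.factorial_mul_pow_le_factorial_mul_pow_self (m l : ℕ) :
    m ! * m ^ l ≤ l ! * m ^ m := by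
  rcases le_total l m with h | h
  · have hfac : l ! * m.descFactorial (m - l) = m ! := by
      simpa [Nat.sub_sub_self h] using Nat.factorial_mul_descFactorial (Nat.sub_le m l)
    calc m ! * m ^ l = l ! * m.descFactorial (m - l) * m ^ l := by rw [hfac]
      _ ≤ l ! * m ^ (m - l) * m ^ l := by gcongr; exact Nat.descFactorial_le_pow _ _
      _ = l ! * m ^ m := by rw [mul_assoc, ← pow_add, Nat.sub_add_cancel h]
  · calc m ! * m ^ l = m ! * m ^ (l - m) * m ^ m := by
          rw [mul_assoc, ← pow_add, Nat.sub_add_cancel h]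
      _ ≤ l ! * m ^ m := by gcongr; exact Nat.factorial_mul_pow_sub_le_factorial h

section Types

variable {α : Type*} [Fintype α]

theorem Nat.multinomial_mul_prod_pow_le (k k' : α → ℕ) (hsum : ∑ a, k' a = ∑ a, k a) :
    multinomial univ k' * ∏ a, k a ^ k' a ≤ multinomial univ k * ∏ a, k a ^ k a := by
  have hspec : (∏ a, (k' a)!) * multinomial univ k' = (∏ a, (k a)!) * multinomial univ k := by
    rw [multinomial_spec, multinomial_spec, hsum]
  have hfac : ∏ a, (k a)! * k a ^ k' a ≤ ∏ a, (k' a)! * k a ^ k a :=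
    prod_le_prod' fun a _ => factorial_mul_pow_le_factorial_mul_pow_self _ _
  refine Nat.le_of_mul_le_mul_left (c := (∏ a, (k a)!) * ∏ a, (k' a)!) ?_ (by positivity)
  calc (∏ a, (k a)!) * (∏ a, (k' a)!) * (multinomial univ k' * ∏ a, k a ^ k' a)
      = (∏ a, (k a)! * k a ^ k' a) * ((∏ a, (k a)!) * multinomial univ k) := by
        rw [prod_mul_distrib, ← hspec]; ring
    _ ≤ (∏ a, (k' a)! * k a ^ k a) * ((∏ a, (k a)!) * multinomial univ k) := by gcongr
    _ = (∏ a, (k a)!) * (∏ a, (k' a)!) * (multinomial univ k * ∏ a, k a ^ k a) := by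
        rw [prod_mul_distrib]; ring

theorem Finset.card_piAntidiag_univ_le [DecidableEq α] (n : ℕ) :
    #(piAntidiag (univ : Finset α) n) ≤ (n + 1) ^ Fintype.card α := by
  have hsub : piAntidiag (univ : Finset α) n ⊆ Fintype.piFinset fun _ => range (n + 1) := by
    intro f hf
    refine Fintype.mem_piFinset.mpr fun a => ?_
    rw [mem_range, Nat.lt_succ_iff, ← (mem_piAntidiag.mp hf).1]
    exact single_le_sum (fun _ _ => Nat.zero_le _) (mem_univ a)
  simpa using card_le_card hsub

theorem multinomial_mul_prod_div_pow_le (k k' : α → ℕ) {n : ℕ} (hk : ∑ a, k a = n)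
    (hk' : ∑ a, k' a = n) :
    (multinomial univ k' : ℝ) * ∏ a, ((k a : ℝ) / n) ^ k' a
      ≤ multinomial univ k * ∏ a, ((k a : ℝ) / n) ^ k a := by
  have hprod : ∀ m : α → ℕ, ∑ a, m a = n →
      ∏ a, ((k a : ℝ) / n) ^ m a = (∏ a, (k a : ℝ) ^ m a) / (n : ℝ) ^ n := by
    intro m hm
    simp only [div_pow, prod_div_distrib, prod_pow_eq_pow_sum, hm]
  rw [hprod k' hk', hprod k hk, mul_div_assoc', mul_div_assoc']
  gcongr ?_ / _
  exact_mod_cast Nat.multinomial_mul_prod_pow_le k k' (hk'.trans hk.symm)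

theorem inv_succ_pow_card_le_multinomial_mul_prod_pow [DecidableEq α] (k : α → ℕ) {n : ℕ}
    (hn : n ≠ 0) (hk : ∑ a, k a = n) :
    (((n : ℝ) + 1) ^ Fintype.card α)⁻¹ ≤ multinomial univ k * ∏ a, ((k a : ℝ) / n) ^ k a := by
  have hsum : ∑ a, (k a : ℝ) / n = 1 := by
    rw [← sum_div, ← Nat.cast_sum, hk, div_self (Nat.cast_ne_zero.mpr hn)]
  have hcard : (#(piAntidiag (univ : Finset α) n) : ℝ) ≤ ((n : ℝ) + 1) ^ Fintype.card α := by
    exact_mod_cast card_piAntidiag_univ_le n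
  rw [inv_le_iff_one_le_mul₀ (by positivity)]
  calc (1 : ℝ) = (∑ a, (k a : ℝ) / n) ^ n := by rw [hsum, one_pow]
    _ = ∑ k' ∈ piAntidiag univ n, (multinomial univ k' : ℝ) * ∏ a, ((k a : ℝ) / n) ^ k' a :=
        sum_pow_eq_sum_piAntidiag _ _ _
    _ ≤ ∑ _k' ∈ piAntidiag univ n, (multinomial univ k : ℝ) * ∏ a, ((k a : ℝ) / n) ^ k a :=
        sum_le_sum fun k' hk' => multinomial_mul_prod_div_pow_le k k' hk (mem_piAntidiag.mp hk').1
    _ ≤ _ := by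
        rw [sum_const, nsmul_eq_mul, mul_comm]
        exact mul_le_mul_of_nonneg_left hcard (by positivity)

end Types

theorem MvPolynomial.prod_X_pow_eq_monomial_equivFunOnFinite_symm {α : Type*} [Fintype α] (m : α → ℕ) :
    ∏ a, (MvPolynomial.X a : MvPolynomial α ℕ) ^ m a
      = MvPolynomial.monomial (Finsupp.equivFunOnFinite.symm m) 1 := by
  rw [MvPolynomial.monomial_eq, Finsupp.prod_fintype _ _ fun _ => pow_zero _]
  simp

section SymbolCount

variable {ι α : Type*} [Fintype ι] [DecidableEq α]

def symbolCount (y : ι → α) (a : α) : ℕ := #{i | y i = a}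

theorem prod_comp_eq_prod_pow_symbolCount [Fintype α] {M : Type*} [CommMonoid M] (y : ι → α)
    (f : α → M) : ∏ i, f (y i) = ∏ a, f a ^ symbolCount y a := by
  simpa [symbolCount] using (prod_fiberwise_eq_prod_filter' univ univ y f).symm

theorem card_filter_symbolCount_eq [Fintype α] [DecidableEq ι] (k : α → ℕ)
    (hk : ∑ a, k a = Fintype.card ι) :
    #{y : ι → α | symbolCount y = k} = multinomial univ k := by
  -- Compare the coefficients of `X ^ k` in `(∑ a, X a) ^ |ι|`, expanded once by the multinomial
  -- theorem and once as a product over `ι`.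
  set toF := (Finsupp.equivFunOnFinite (α := α) (M := ℕ)).symm
  have hexpand : (∑ a, MvPolynomial.X a : MvPolynomial α ℕ) ^ Fintype.card ι
      = ∑ y : ι → α, MvPolynomial.monomial (toF (symbolCount y)) 1 := by
    rw [← Finset.card_univ, ← prod_const, Fintype.prod_sum]
    simp only [prod_comp_eq_prod_pow_symbolCount, MvPolynomial.prod_X_pow_eq_monomial_equivFunOnFinite_symm, toF]
  have hcoeff := congrArg (MvPolynomial.coeff (toF k)) hexpand
  rw [MvPolynomial.coeff_sum_X_pow_of_fintype, MvPolynomial.coeff_sum] at hcoeff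
  rw [Finsupp.sum_fintype _ _ fun _ => rfl, Finsupp.multinomial_eq_of_support_subset
    (subset_univ _)] at hcoeff
  simp only [MvPolynomial.coeff_monomial, toF.injective.eq_iff, toF,
    Finsupp.coe_equivFunOnFinite_symm, hk, if_true] at hcoeff
  rw [card_filter]
  exact_mod_cast hcoeff.symm

theorem sum_filter_symbolCount_eq [Fintype α] [DecidableEq ι] {R : Type*} [CommSemiring R]
    (k : α → ℕ) (hk : ∑ a, k a = Fintype.card ι) (P : α → R) :
    ∑ y : ι → α with symbolCount y = k, ∏ i, P (y i) = multinomial univ k * ∏ a, P a ^ k a := by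
  rw [← card_filter_symbolCount_eq k hk, ← nsmul_eq_mul, ← sum_const]
  refine sum_congr rfl fun y hy => ?_
  rw [prod_comp_eq_prod_pow_symbolCount, (mem_filter.mp hy).2]

end SymbolCount

theorem exp_neg_mul_klReal_mul_prod_pow {α : Type*} [Fintype α] {V P : α → ℝ} {n : ℕ}
    (k : α → ℕ) (hV : ∀ a, 0 ≤ V a) (hP : ∀ a, 0 ≤ P a) (habs : ∀ a, P a = 0 → V a = 0)
    (hk : ∀ a, (n : ℝ) * V a = k a) :
    Real.exp (-(n : ℝ) * klReal V P) * ∏ a, V a ^ k a = ∏ a, P a ^ k a := by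
  rw [klReal, mul_sum, Real.exp_sum, ← prod_mul_distrib]
  refine prod_congr rfl fun a _ => ?_
  by_cases hVa : V a = 0
  · have hka : (k a : ℝ) = 0 := by rw [← hk, hVa, mul_zero]
    simp [hVa, Nat.cast_eq_zero.mp hka]
  have hVpos : 0 < V a := (hV a).lt_of_ne' hVa
  have hPpos : 0 < P a := (hP a).lt_of_ne' fun h => hVa (habs a h)
  rw [if_neg hVa]
  calc Real.exp (-(n : ℝ) * (V a * Real.log (V a / P a))) * V a ^ k a
      = Real.exp (k a * Real.log (P a / V a)) * V a ^ k a := by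
        rw [← hk, ← inv_div, Real.log_inv]
        congr 2
        ring
    _ = P a ^ k a := by
        rw [Real.exp_nat_mul, Real.exp_log (div_pos hPpos hVpos), ← mul_pow, div_mul_cancel₀ _ hVa]

/-- method-of-types lower bound (Csiszár–Körner Lemma 2.6):
for an `n`-type `V` absolutely continuous w.r.t. `P`, the `Pⁿ`-probability that
the type of `Yⁿ` equals `V` is at least `(n+1)^{-|𝒴|} e^{-n D(V‖P)}`. -/
theorem stmt4 {𝒴 : Type*} [Fintype 𝒴] [DecidableEq 𝒴] (n : ℕ) (hn : 0 < n)
    (V P : 𝒴 → ℝ) (hV : IsPMF V) (hP : IsPMF P)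
    (habs : ∀ y, P y = 0 → V y = 0)
    (htype : ∀ y, ∃ k : ℕ, V y = (k : ℝ) / n) :
    (((n : ℝ) + 1) ^ (Fintype.card 𝒴))⁻¹ * Real.exp (-(n : ℝ) * klReal V P)
      ≤ ∑ y : Fin n → 𝒴,
          Set.indicator {y : Fin n → 𝒴 | empDist y = V} (fun y => ∏ i, P (y i)) y := by
  choose k hk using htype
  have hn0 : (n : ℝ) ≠ 0 := by positivity
  have hnV : ∀ a, (n : ℝ) * V a = k a := fun a => by rw [hk a, mul_div_cancel₀ _ hn0]
  have hsum : ∑ a, k a = n := by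
    have : ((∑ a, k a : ℕ) : ℝ) = n := by
      simp only [Nat.cast_sum, ← hnV, ← mul_sum, hV.2, mul_one]
    exact_mod_cast this
  have htypeClass : ∀ y : Fin n → 𝒴, y ∈ {y | empDist y = V} ↔ symbolCount y = k := fun y => by
    simp only [funext_iff, empDist, hk, div_left_inj' hn0, Nat.cast_inj]
    rfl
  calc (((n : ℝ) + 1) ^ (Fintype.card 𝒴))⁻¹ * Real.exp (-(n : ℝ) * klReal V P)
      ≤ multinomial univ k * (∏ a, V a ^ k a) * Real.exp (-(n : ℝ) * klReal V P) := by
        gcongr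
        simpa only [hk] using inv_succ_pow_card_le_multinomial_mul_prod_pow k hn.ne' hsum
    _ = multinomial univ k * ∏ a, P a ^ k a := by
        rw [mul_assoc, mul_comm (∏ a, V a ^ k a),
          exp_neg_mul_klReal_mul_prod_pow k hV.1 hP.1 habs hnV]
    _ = ∑ y : Fin n → 𝒴 with symbolCount y = k, ∏ i, P (y i) :=
        (sum_filter_symbolCount_eq k (by simpa using hsum) P).symm
    _ = _ := by rw [sum_indicator_eq_sum_filter, filter_congr fun y _ => htypeClass y]
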